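/- Let f : ℝ → ℂ^{d×d} take Hermitian values, let f̂₀ ∈ ℂ^{d×d} be Hermitian invertible, let q ∈ ℂ^d, and set f̃(θ) = q^H f(θ) q. Fix n ≥ 1 and assume f̃(θ_i^{(n)}) ≠ 0 for every i = 0,…,n−1, so that the coarse matrix P^H C_n(f) P is invertible, where P = I_n ⊗ q. Then for any ω_pre, ω_post ∈ ℝ, the two-grid iteration matrix M_n = (I_{dn} − ω_post (I_n ⊗ f̂₀^{-1}) C_n(f)) (I_{dn} − P (P^H C_n(f) P)^{-1} P^H C_n(f)) (I_{dn} − ω_pre (I_n ⊗ f̂₀^{-1}) C_n(f)) equals C_n(g), the block circulant matrix generated by g(θ) = (I_d − ω_post f̂₀^{-1} f(θ)) (I_d − f̃(θ)^{-1} q q^H f(θ)) (I_d − ω_pre f̂₀^{-1} f(θ)). -/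

import Mathlib

/-!
Conjugation by the unitary `F_n ⊗ I_d` turns `f ↦ C_n(f)` into a `ℂ`-algebra homomorphism: sample
`f` at the grid points, place the samples on the block diagonal, conjugate. Each factor of the
two-grid matrix is `C_n` of the corresponding factor of `g`. The block-Jacobi matrix
`I_n ⊗ f̂₀⁻¹` commutes with `F_n ⊗ I_d`, so it is `C_n` of the constant `f̂₀⁻¹`. The aggregation
operator intertwines, `(F_n ⊗ I_d) P = P F_n`, so the coarse matrix is
`Pᴴ C_n(f) P = F_n diag(f̃(θ_i)) F_nᴴ`, which is invertible exactly because `f̃(θ_i) ≠ 0`.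
Therefore `P (Pᴴ C_n(f) P)⁻¹ Pᴴ = C_n(f̃⁻¹ q qᴴ)`. Multiplicativity of `C_n` gives the result.
-/

open Matrix
open scoped Kronecker

/-- The grid points `θ_i^{(n)} = 2πi/n`. -/
noncomputable def gridPt (n : ℕ) (i : Fin n) : ℝ := 2 * Real.pi * i / n

/-- The Fourier matrix `F_n` with entries `n^{-1/2} e^{2πi jk/n}`. -/
noncomputable def Fmat (n : ℕ) : Matrix (Fin n) (Fin n) ℂ :=
  Matrix.of fun j k : Fin n =>
    (((Real.sqrt n)⁻¹ : ℝ) : ℂ) *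
      Complex.exp (2 * Real.pi * Complex.I * (j : ℕ) * (k : ℕ) / n)

/-- The block diagonal matrix with `d×d` diagonal blocks `g 0, …, g (n-1)`. -/
def blkDiag (n d : ℕ) (g : Fin n → Matrix (Fin d) (Fin d) ℂ) :
    Matrix (Fin n × Fin d) (Fin n × Fin d) ℂ :=
  Matrix.of fun p q => if p.1 = q.1 then g p.1 p.2 q.2 else 0

/-- The `dn × dn` block circulant matrix generated by `f : ℝ → ℂ^{d×d}`. -/
noncomputable def Cblock (n d : ℕ) (f : ℝ → Matrix (Fin d) (Fin d) ℂ) :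
    Matrix (Fin n × Fin d) (Fin n × Fin d) ℂ :=
  (Fmat n ⊗ₖ (1 : Matrix (Fin d) (Fin d) ℂ)) *
    blkDiag n d (fun i => f (gridPt n i)) *
    (Fmat n ⊗ₖ (1 : Matrix (Fin d) (Fin d) ℂ))ᴴ

/-- The aggregation operator `P = I_n ⊗ q : ℂ^{dn × n}`. -/
def aggOp (n d : ℕ) (q : Fin d → ℂ) : Matrix (Fin n × Fin d) (Fin n) ℂ :=
  Matrix.of fun p j => if p.1 = j then q p.2 else 0

theorem Fmat_apply_eq_pow (n : ℕ) (j k : Fin n) :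
    Fmat n j k = (((Real.sqrt n)⁻¹ : ℝ) : ℂ) *
      Complex.exp (2 * Real.pi * Complex.I / n) ^ ((j : ℕ) * (k : ℕ)) := by
  rw [Fmat, of_apply, ← Complex.exp_nat_mul]
  push_cast
  ring_nf

theorem Fmat_mem_unitaryGroup (n : ℕ) : Fmat n ∈ unitaryGroup (Fin n) ℂ := by
  rw [mem_unitaryGroup_iff]
  rcases Nat.eq_zero_or_pos n with rfl | hn
  · exact Subsingleton.elim _ _
  set ζ := Complex.exp (2 * Real.pi * Complex.I / n)
  have hF : ∀ j k : Fin n, Fmat n j k = (((Real.sqrt n)⁻¹ : ℝ) : ℂ) * ζ ^ ((j : ℕ) * (k : ℕ)) :=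
    Fmat_apply_eq_pow n
  have hζ : IsPrimitiveRoot ζ n := Complex.isPrimitiveRoot_exp n hn.ne'
  have hconj : star ζ = ζ⁻¹ := (Complex.inv_eq_conj (hζ.norm'_eq_one hn.ne')).symm
  clear_value ζ
  ext j j'
  set w := ζ ^ (j : ℕ) * (ζ ^ (j' : ℕ))⁻¹
  have hsummand (k : Fin n) : Fmat n j k * star (Fmat n j' k) = (n : ℂ)⁻¹ * w ^ (k : ℕ) := by
    simp only [hF, star_mul', star_pow, hconj, Complex.star_def, Complex.conj_ofReal, w, mul_pow,
      inv_pow, ← pow_mul]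
    rw [mul_mul_mul_comm, ← Complex.ofReal_mul, ← mul_inv, Real.mul_self_sqrt n.cast_nonneg]
    push_cast
    ring
  have hwn : w ^ n = 1 := by
    simp only [w, mul_pow, inv_pow, pow_right_comm _ _ n, hζ.pow_eq_one, one_pow, inv_one, mul_one]
  simp only [mul_apply, star_apply, hsummand, ← Finset.mul_sum, one_apply]
  rw [Fin.sum_univ_eq_sum_range (w ^ ·)]
  by_cases hjj : j = j'
  · have hw : w = 1 := by simp [w, hjj, hζ.ne_zero hn.ne']
    simp [hw, hjj, hn.ne']
  · have hw : w ≠ 1 := by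
      rw [Ne, mul_inv_eq_one₀ (pow_ne_zero _ (hζ.ne_zero hn.ne'))]
      exact fun h => hjj (Fin.ext (hζ.pow_inj j.2 j'.2 h))
    rw [geom_sum_eq hw, hwn, sub_self, zero_div, mul_zero, if_neg hjj]

theorem Fmat_mul_conjTranspose (n : ℕ) : Fmat n * (Fmat n)ᴴ = 1 :=
  (Fmat_mem_unitaryGroup n).2

noncomputable def blkDiagAlgHom (n d : ℕ) :
    (Fin n → Matrix (Fin d) (Fin d) ℂ) →ₐ[ℂ] Matrix (Fin n × Fin d) (Fin n × Fin d) ℂ :=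
  (reindexAlgEquiv ℂ ℂ (Equiv.prodComm (Fin d) (Fin n))).toAlgHom.comp
    { blockDiagonalRingHom (Fin d) (Fin n) ℂ with
      commutes' := fun c => by
        simp [algebraMap_eq_diagonal, Pi.algebraMap_def, blockDiagonal_diagonal] }

theorem blkDiagAlgHom_apply (n d : ℕ) (g : Fin n → Matrix (Fin d) (Fin d) ℂ) :
    blkDiagAlgHom n d g = blkDiag n d g := by
  change reindex (Equiv.prodComm _ _) (Equiv.prodComm _ _) (blockDiagonal g) = _
  ext p r
  simp [blkDiag, blockDiagonal_apply]

noncomputable def CblockAlgHom (n d : ℕ) :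
    (ℝ → Matrix (Fin d) (Fin d) ℂ) →ₐ[ℂ] Matrix (Fin n × Fin d) (Fin n × Fin d) ℂ :=
  (Unitary.conjStarAlgAut ℂ _
      (⟨Fmat n ⊗ₖ 1, kronecker_mem_unitary (Fmat_mem_unitaryGroup n) (one_mem _)⟩ :
        unitary (Matrix (Fin n × Fin d) (Fin n × Fin d) ℂ))).toAlgEquiv.toAlgHom.comp <|
    (blkDiagAlgHom n d).comp <| AlgHom.pi fun i => Pi.evalAlgHom ℂ _ (gridPt n i)

theorem CblockAlgHom_apply (n d : ℕ) (f : ℝ → Matrix (Fin d) (Fin d) ℂ) :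
    CblockAlgHom n d f = Cblock n d f :=
  congrArg (_ * · * _) (blkDiagAlgHom_apply n d _)

theorem blkDiag_const_eq_Cblock (n d : ℕ) (A : Matrix (Fin d) (Fin d) ℂ) :
    blkDiag n d (fun _ => A) = Cblock n d (fun _ => A) := by
  have hkron : blkDiag n d (fun _ => A) = 1 ⊗ₖ A := by
    ext p r
    simp [blkDiag, kroneckerMap_apply, one_apply]
  rw [Cblock, hkron, conjTranspose_kronecker, conjTranspose_one, ← mul_kronecker_mul,
    ← mul_kronecker_mul, Matrix.mul_one, Fmat_mul_conjTranspose, Matrix.one_mul, Matrix.mul_one]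

theorem kronecker_one_mul_aggOp (n d : ℕ) (q : Fin d → ℂ) (A : Matrix (Fin n) (Fin n) ℂ) :
    (A ⊗ₖ (1 : Matrix (Fin d) (Fin d) ℂ)) * aggOp n d q = aggOp n d q * A := by
  ext p k
  simp [mul_apply, Fintype.sum_prod_type, aggOp, kroneckerMap_apply, one_apply, mul_comm]

theorem conjTranspose_aggOp_mul_blkDiag_mul_aggOp (n d : ℕ) (q : Fin d → ℂ)
    (g : Fin n → Matrix (Fin d) (Fin d) ℂ) :
    (aggOp n d q)ᴴ * blkDiag n d g * aggOp n d q = diagonal fun i => star q ⬝ᵥ (g i *ᵥ q) := by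
  ext j k
  simp only [mul_apply, Fintype.sum_prod_type, aggOp, blkDiag, conjTranspose_apply, of_apply,
    diagonal_apply, dotProduct, mulVec, Pi.star_apply, apply_ite (star : ℂ → ℂ), star_zero,
    ite_mul, mul_ite, zero_mul, mul_zero, Finset.sum_ite_eq', Finset.mem_univ, if_true,
    Finset.sum_ite_irrel, Finset.sum_const_zero]
  rcases eq_or_ne j k with rfl | hjk
  · simp only [if_true, Finset.mul_sum, Finset.sum_mul, mul_assoc]
    exact Finset.sum_comm
  · simp [hjk, hjk.symm]

theorem aggOp_mul_diagonal_mul_conjTranspose_aggOp (n d : ℕ) (q : Fin d → ℂ) (c : Fin n → ℂ) :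
    aggOp n d q * diagonal c * (aggOp n d q)ᴴ =
      blkDiag n d fun i => c i • vecMulVec q (star q) := by
  ext p r
  simp only [mul_apply, aggOp, blkDiag, conjTranspose_apply, of_apply, diagonal_apply,
    Matrix.smul_apply, vecMulVec_apply, Pi.star_apply, apply_ite (star : ℂ → ℂ), star_zero,
    ite_mul, mul_ite, zero_mul, mul_zero, smul_eq_mul, Finset.sum_ite_eq, Finset.sum_ite_eq',
    Finset.mem_univ, if_true]
  split_ifs with h
  · rw [h]
    ring
  · rfl

theorem inv_conj_of_mem_unitaryGroup {m α : Type*} [Fintype m] [DecidableEq m] [CommRing α]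
    [StarRing α] {U : Matrix m m α} (hU : U ∈ unitaryGroup m α) (A : Matrix m m α) :
    (U * A * star U)⁻¹ = U * A⁻¹ * star U := by
  rw [Matrix.mul_inv_rev, Matrix.mul_inv_rev, inv_eq_left_inv hU.1, inv_eq_left_inv hU.2,
    Matrix.mul_assoc]

theorem conjTranspose_aggOp_mul_Cblock_mul_aggOp (n d : ℕ) (f : ℝ → Matrix (Fin d) (Fin d) ℂ)
    (q : Fin d → ℂ) :
    (aggOp n d q)ᴴ * Cblock n d f * aggOp n d q =
      Fmat n * diagonal (fun i => star q ⬝ᵥ (f (gridPt n i) *ᵥ q)) * (Fmat n)ᴴ := by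
  set P := aggOp n d q
  set U := Fmat n ⊗ₖ (1 : Matrix (Fin d) (Fin d) ℂ)
  have hUP : Uᴴ * P = P * (Fmat n)ᴴ := by
    rw [conjTranspose_kronecker, conjTranspose_one, kronecker_one_mul_aggOp]
  calc Pᴴ * Cblock n d f * P
      = (Uᴴ * P)ᴴ * blkDiag n d (fun i => f (gridPt n i)) * (Uᴴ * P) := by
        simp only [Cblock, conjTranspose_mul, conjTranspose_conjTranspose, Matrix.mul_assoc, U]
    _ = Fmat n * (Pᴴ * blkDiag n d (fun i => f (gridPt n i)) * P) * (Fmat n)ᴴ := by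
        simp only [hUP, conjTranspose_mul, conjTranspose_conjTranspose, Matrix.mul_assoc]
    _ = _ := by rw [conjTranspose_aggOp_mul_blkDiag_mul_aggOp]

theorem aggOp_mul_inv_coarse_mul_conjTranspose (n d : ℕ) (f : ℝ → Matrix (Fin d) (Fin d) ℂ)
    (q : Fin d → ℂ) (hgrid : ∀ i : Fin n, star q ⬝ᵥ (f (gridPt n i) *ᵥ q) ≠ 0) :
    aggOp n d q * ((aggOp n d q)ᴴ * Cblock n d f * aggOp n d q)⁻¹ * (aggOp n d q)ᴴ =
      Cblock n d fun θ => (star q ⬝ᵥ (f θ *ᵥ q))⁻¹ • vecMulVec q (star q) := by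
  set P := aggOp n d q
  set U := Fmat n ⊗ₖ (1 : Matrix (Fin d) (Fin d) ℂ)
  set c : Fin n → ℂ := fun i => star q ⬝ᵥ (f (gridPt n i) *ᵥ q)
  have hUP : U * P = P * Fmat n := kronecker_one_mul_aggOp n d q (Fmat n)
  have hdiag : (diagonal c)⁻¹ = diagonal fun i => (c i)⁻¹ := by
    refine inv_eq_left_inv ?_
    rw [diagonal_mul_diagonal, ← diagonal_one]
    exact congrArg diagonal (funext fun i => inv_mul_cancel₀ (hgrid i))
  rw [conjTranspose_aggOp_mul_Cblock_mul_aggOp, ← star_eq_conjTranspose,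
    inv_conj_of_mem_unitaryGroup (Fmat_mem_unitaryGroup n), hdiag, star_eq_conjTranspose]
  calc P * (Fmat n * diagonal (fun i => (c i)⁻¹) * (Fmat n)ᴴ) * Pᴴ
      = (P * Fmat n) * diagonal (fun i => (c i)⁻¹) * (P * Fmat n)ᴴ := by
        simp only [conjTranspose_mul, Matrix.mul_assoc]
    _ = U * (P * diagonal (fun i => (c i)⁻¹) * Pᴴ) * Uᴴ := by
        simp only [← hUP, conjTranspose_mul, Matrix.mul_assoc]
    _ = _ := by rw [aggOp_mul_diagonal_mul_conjTranspose_aggOp]; rfl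

theorem stmt13_general {d : ℕ} (f : ℝ → Matrix (Fin d) (Fin d) ℂ)
    (fhat0 : Matrix (Fin d) (Fin d) ℂ)
    (q : Fin d → ℂ) (n : ℕ)
    (hgrid : ∀ i : Fin n, star q ⬝ᵥ (f (gridPt n i) *ᵥ q) ≠ 0)
    (ωpre ωpost : ℝ) :
    (1 - (ωpost : ℂ) • ((blkDiag n d fun _ => fhat0⁻¹) * Cblock n d f)) *
      (1 - aggOp n d q *
        ((aggOp n d q)ᴴ * Cblock n d f * aggOp n d q)⁻¹ *
        (aggOp n d q)ᴴ * Cblock n d f) *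
      (1 - (ωpre : ℂ) • ((blkDiag n d fun _ => fhat0⁻¹) * Cblock n d f)) =
    Cblock n d (fun θ =>
      (1 - (ωpost : ℂ) • (fhat0⁻¹ * f θ)) *
        (1 - (star q ⬝ᵥ (f θ *ᵥ q))⁻¹ • (vecMulVec q (star q) * f θ)) *
        (1 - (ωpre : ℂ) • (fhat0⁻¹ * f θ))) := by
  rw [aggOp_mul_inv_coarse_mul_conjTranspose n d f q hgrid, blkDiag_const_eq_Cblock]
  simp only [← CblockAlgHom_apply, ← map_mul, ← map_smul, ← map_one (CblockAlgHom n d),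
    ← map_sub]
  congr 1
  ext1 θ
  simp only [Pi.mul_apply, Pi.sub_apply, Pi.one_apply, Pi.smul_apply, smul_mul_assoc]

/-- The two-grid iteration matrix with block Jacobi smoothing and aggregation
grid transfer operator is the block circulant matrix generated by
`g(θ) = (I - ω_post f̂₀⁻¹ f(θ))(I - f̃(θ)⁻¹ qqᴴ f(θ))(I - ω_pre f̂₀⁻¹ f(θ))`. -/
theorem stmt13 {d : ℕ} (f : ℝ → Matrix (Fin d) (Fin d) ℂ)
    (hherm : ∀ θ, (f θ).IsHermitian)
    (fhat0 : Matrix (Fin d) (Fin d) ℂ) (hherm0 : fhat0.IsHermitian)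
    (hinv : IsUnit fhat0.det)
    (q : Fin d → ℂ) (n : ℕ) (hn : 1 ≤ n)
    (hgrid : ∀ i : Fin n, star q ⬝ᵥ (f (gridPt n i) *ᵥ q) ≠ 0)
    (ωpre ωpost : ℝ) :
    (1 - (ωpost : ℂ) • ((blkDiag n d fun _ => fhat0⁻¹) * Cblock n d f)) *
      (1 - aggOp n d q *
        ((aggOp n d q)ᴴ * Cblock n d f * aggOp n d q)⁻¹ *
        (aggOp n d q)ᴴ * Cblock n d f) *
      (1 - (ωpre : ℂ) • ((blkDiag n d fun _ => fhat0⁻¹) * Cblock n d f)) =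
    Cblock n d (fun θ =>
      (1 - (ωpost : ℂ) • (fhat0⁻¹ * f θ)) *
        (1 - (star q ⬝ᵥ (f θ *ᵥ q))⁻¹ • (vecMulVec q (star q) * f θ)) *
        (1 - (ωpre : ℂ) • (fhat0⁻¹ * f θ))) :=
  stmt13_general f fhat0 q n hgrid ωpre ωpost
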